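/- Let Λ be a set of nonnegative real numbers satisfying DCC. Consider the set Ω of all real numbers of the form a = 1 − 1/l + (1/l)·Σ_{s=1}^{k} n_s λ_s, where l ≥ 1 and k ≥ 0 are natural numbers, n_1,…,n_k are natural numbers, λ_1,…,λ_k ∈ Λ, and a ≤ 1 (equivalently Σ_{s} n_s λ_s ≤ 1). Then Ω satisfies DCC. (This is the arithmetic content of Proposition 4.5: the coefficients of the boundary divisor B_{S'} arising from generalized adjunction have exactly this form, with l a Cartier index, b_{k} ∈ Λ the coefficients of the boundary part and μ_j ∈ Λ the coefficients of the nef part; hence they lie in a DCC set Ω depending only on Λ.) -/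

import Mathlib

/-!
Write `a = 1 - (1 - t) / l` with `t = ∑ nₛ λₛ` in the additive monoid `M` generated by `Λ`,
which is well-founded because `Λ` is and its elements are nonnegative. If `a ≤ c < 1` then
`l ≤ 1 / (1 - c)`, so the coefficients `≤ c` lie in finitely many images of `M` under increasing
affine maps and form a well-founded set. A descending chain of coefficients starts at some value
`≤ 1`, so from its second term on it stays below such a `c`.
-/

/-- A set of real numbers satisfies DCC if it contains no infinite strictly
decreasing sequence. -/
def SatisfiesDCC (S : Set ℝ) : Prop :=
  ¬ ∃ f : ℕ → ℝ, (∀ n, f n ∈ S) ∧ StrictAnti f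

open Set

theorem satisfiesDCC_iff_isWF {S : Set ℝ} : SatisfiesDCC S ↔ S.IsWF := by
  rw [isWF_iff_no_descending_seq, SatisfiesDCC]
  exact ⟨fun h f hf hS => h ⟨f, hS, hf⟩, fun h ⟨f, hS, hf⟩ => h f hf hS⟩

theorem Set.isWF_of_forall_lt_isWF_inter_Iic {α : Type*} [Preorder α] {s : Set α}
    (h : ∀ x ∈ s, ∀ c < x, (s ∩ Iic c).IsWF) : s.IsWF := by
  rw [isWF_iff_no_descending_seq]
  intro f hf hs
  have h₁ := h (f 0) (hs 0) (f 1) (hf zero_lt_one)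
  rw [isWF_iff_no_descending_seq] at h₁
  exact h₁ (fun n => f (n + 1)) (fun _ _ h => hf (Nat.succ_lt_succ h))
    fun n => ⟨hs _, hf.antitone (Nat.succ_le_succ n.zero_le)⟩

theorem AddSubmonoid.sum_nsmul_mem_closure {M : Type*} [AddCommMonoid M] {S : Set M} {k : ℕ}
    (n : Fin k → ℕ) {x : Fin k → M} (hx : ∀ s, x s ∈ S) :
    ∑ s, n s • x s ∈ closure S :=
  sum_mem _ fun s _ => _root_.nsmul_mem (subset_closure (hx s)) _

noncomputable def adjunctionCoeff (l : ℕ) (t : ℝ) : ℝ := 1 - 1 / l + 1 / l * t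

theorem monotone_adjunctionCoeff (l : ℕ) : Monotone (adjunctionCoeff l) := fun _ _ h => by
  unfold adjunctionCoeff; gcongr

theorem natCast_mul_one_sub_adjunctionCoeff {l : ℕ} (hl : l ≠ 0) (t : ℝ) :
    l * (1 - adjunctionCoeff l t) = 1 - t := by
  unfold adjunctionCoeff; field_simp; ring

theorem natCast_le_of_adjunctionCoeff_le {l : ℕ} (hl : l ≠ 0) {t c : ℝ} (ht : 0 ≤ t) (hc : c < 1)
    (h : adjunctionCoeff l t ≤ c) : (l : ℝ) ≤ 1 / (1 - c) := by
  rw [le_div_iff₀ (sub_pos.2 hc)]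
  calc (l : ℝ) * (1 - c) ≤ l * (1 - adjunctionCoeff l t) := by gcongr
    _ = 1 - t := natCast_mul_one_sub_adjunctionCoeff hl t
    _ ≤ 1 := by linarith

theorem dcc_adjunction_coeffs (Λ : Set ℝ) (h0 : ∀ a ∈ Λ, 0 ≤ a)
    (hΛ : SatisfiesDCC Λ) :
    SatisfiesDCC {a : ℝ | ∃ (l : ℕ), 1 ≤ l ∧ ∃ (k : ℕ) (n : Fin k → ℕ)
      (lam : Fin k → ℝ), (∀ s, lam s ∈ Λ) ∧
      a = 1 - 1 / (l : ℝ) + (1 / (l : ℝ)) * ∑ s, (n s : ℝ) * lam s ∧ a ≤ 1} := by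
  have hM : (AddSubmonoid.closure Λ : Set ℝ).IsPWO :=
    (satisfiesDCC_iff_isWF.1 hΛ).isPWO.addSubmonoid_closure h0
  have hM0 : ∀ t ∈ AddSubmonoid.closure Λ, 0 ≤ t := fun t ht =>
    AddSubmonoid.closure_induction h0 le_rfl (fun _ _ _ _ => add_nonneg) ht
  rw [satisfiesDCC_iff_isWF]
  refine isWF_of_forall_lt_isWF_inter_Iic fun x ⟨_, _, _, _, _, _, _, hx1⟩ c hcx => ?_
  have hc : c < 1 := hcx.trans_le hx1
  refine ((Finset.isPWO_sup (Finset.Icc 1 ⌊1 / (1 - c)⌋₊)).2 fun l _ =>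
    hM.image_of_monotone (monotone_adjunctionCoeff l)).isWF.mono ?_
  rintro a ⟨⟨l, hl, k, n, lam, hlam, rfl, -⟩, hac⟩
  have ht : ∑ s, (n s : ℝ) * lam s ∈ AddSubmonoid.closure Λ := by
    simpa only [nsmul_eq_mul] using AddSubmonoid.sum_nsmul_mem_closure n hlam
  have hlc := natCast_le_of_adjunctionCoeff_le (by omega) (hM0 _ ht) hc hac
  simp only [Finset.sup_set_eq_biUnion, mem_iUnion₂, Finset.mem_Icc]
  exact ⟨l, ⟨hl, Nat.le_floor hlc⟩, _, ht, rfl⟩
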